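/- arXiv:2603.07132 — 4 statements merged into one kernel-verified Lean document; each statement's English description precedes it below -/
import Mathlib

section
/- Let β > 0, let τ be a probability measure on ℝ, and let a ∈ ℝ. Then the non-tangential limit of (z − a)^β ∫ (z − x)^{−β} dτ(x) as z → a within any cone {u + iv : v > 0, |u − a| < θ v} (θ > 0) equals τ({a}). -/
/-!
For `z` in the cone `|Re z - a| < θ Im z` and every real `x`,
`|z - a| ≤ √(1 + θ²) Im z ≤ √(1 + θ²) |z - x|`, so the integrand `(z - a)^β (z - x)^(-β)` is
bounded by `√(1 + θ²)^β` uniformly in `x`. As `z → a` it equals `1` at `x = a` and tends to `0`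
at every other `x`, so dominated convergence turns the integral into `∫ 1_{a} dτ = τ {a}`.
-/

open Complex MeasureTheory Filter Topology

def nonTangentialCone (a θ : ℝ) : Set ℂ := {z : ℂ | 0 < z.im ∧ |z.re - a| < θ * z.im}

lemma sub_ofReal_ne_zero_of_im_pos {z : ℂ} (hz : 0 < z.im) (x : ℝ) : z - x ≠ 0 := by
  intro h
  have him := congrArg Complex.im h
  rw [sub_im, ofReal_im, sub_zero, zero_im] at him
  exact hz.ne' him

lemma im_le_norm_sub_ofReal (z : ℂ) (x : ℝ) : z.im ≤ ‖z - x‖ := by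
  simpa using Complex.im_le_norm (z - x)

lemma norm_sub_ofReal_le_of_mem_nonTangentialCone {a θ : ℝ} {z : ℂ}
    (hz : z ∈ nonTangentialCone a θ) : ‖z - a‖ ≤ √(1 + θ ^ 2) * z.im := by
  have hre : (z.re - a) ^ 2 ≤ (θ * z.im) ^ 2 :=
    sq_le_sq' (abs_lt.mp hz.2).1.le (abs_lt.mp hz.2).2.le
  rw [← Real.sqrt_sq hz.1.le, ← Real.sqrt_mul (by positivity), Complex.norm_def,
    Complex.normSq_apply]
  refine Real.sqrt_le_sqrt ?_
  simp only [sub_re, ofReal_re, sub_im, ofReal_im, sub_zero]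
  nlinarith

lemma norm_cpow_mul_cpow_neg_le_of_mem_nonTangentialCone {a θ β : ℝ} (hβ : 0 ≤ β) {z : ℂ}
    (hz : z ∈ nonTangentialCone a θ) (x : ℝ) :
    ‖(z - a) ^ (β : ℂ) * (z - x) ^ ((-β : ℝ) : ℂ)‖ ≤ √(1 + θ ^ 2) ^ β := by
  have hx : 0 < ‖z - x‖ := hz.1.trans_le (im_le_norm_sub_ofReal z x)
  have hratio : ‖z - a‖ / ‖z - x‖ ≤ √(1 + θ ^ 2) :=
    div_le_of_le_mul₀ hx.le (by positivity) <|
      (norm_sub_ofReal_le_of_mem_nonTangentialCone hz).trans <|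
        mul_le_mul_of_nonneg_left (im_le_norm_sub_ofReal z x) (by positivity)
  rw [norm_mul, norm_cpow_real, norm_cpow_real, Real.rpow_neg hx.le, ← div_eq_mul_inv,
    ← Real.div_rpow (norm_nonneg _) hx.le]
  exact Real.rpow_le_rpow (by positivity) hratio hβ

lemma cpow_mul_cpow_neg_self {w : ℂ} (hw : w ≠ 0) (β : ℝ) :
    w ^ (β : ℂ) * w ^ ((-β : ℝ) : ℂ) = 1 := by
  rw [← cpow_add _ _ hw, ofReal_neg, add_neg_cancel, cpow_zero]

lemma tendsto_cpow_mul_cpow_neg_zero {a x β : ℝ} (hβ : 0 < β) (hx : x ≠ a) :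
    Tendsto (fun z : ℂ => (z - a) ^ (β : ℂ) * (z - x) ^ ((-β : ℝ) : ℂ)) (𝓝 a) (𝓝 0) := by
  have hax : ‖(a : ℂ) - x‖ ≠ 0 := by simpa [sub_eq_zero] using hx.symm
  have hcont : ContinuousAt (fun z : ℂ => ‖z - a‖ ^ β * ‖z - x‖ ^ (-β)) a :=
    ((continuous_norm.comp (continuous_id.sub continuous_const)).continuousAt.rpow_const
      (Or.inr hβ.le)).mul
      ((continuous_norm.comp (continuous_id.sub continuous_const)).continuousAt.rpow_const
      (Or.inl hax))
  have hnorm := hcont.tendsto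
  rw [sub_self, norm_zero, Real.zero_rpow hβ.ne', zero_mul] at hnorm
  refine tendsto_zero_iff_norm_tendsto_zero.mpr (hnorm.congr fun z => ?_)
  rw [norm_mul, norm_cpow_real, norm_cpow_real]

theorem tendsto_integral_cpow_mul_cpow_neg_nonTangentialCone {β : ℝ} (hβ : 0 < β)
    (τ : Measure ℝ) [IsFiniteMeasure τ] (a θ : ℝ) :
    Tendsto (fun z : ℂ => ∫ x, (z - a) ^ (β : ℂ) * (z - x) ^ ((-β : ℝ) : ℂ) ∂τ)
      (𝓝[nonTangentialCone a θ] a) (𝓝 (τ.real {a})) := by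
  have hlim : ∀ x : ℝ, Tendsto (fun z : ℂ => (z - a) ^ (β : ℂ) * (z - x) ^ ((-β : ℝ) : ℂ))
      (𝓝[nonTangentialCone a θ] a) (𝓝 (({a} : Set ℝ).indicator (fun _ => (1 : ℂ)) x)) := by
    intro x
    rcases eq_or_ne x a with rfl | hx
    · refine tendsto_const_nhds.congr' ?_
      filter_upwards [self_mem_nhdsWithin] with z hz
      rw [Set.indicator_of_mem (Set.mem_singleton x),
        cpow_mul_cpow_neg_self (sub_ofReal_ne_zero_of_im_pos hz.1 x) β]
    · simpa [hx] using (tendsto_cpow_mul_cpow_neg_zero hβ hx).mono_left nhdsWithin_le_nhds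
  have hmeas : ∀ z : ℂ, AEStronglyMeasurable
      (fun x : ℝ => (z - a) ^ (β : ℂ) * (z - x) ^ ((-β : ℝ) : ℂ)) τ := fun _ =>
    ((measurable_const.sub measurable_ofReal).pow measurable_const).const_mul _
      |>.aestronglyMeasurable
  have hdom := tendsto_integral_filter_of_dominated_convergence (fun _ => √(1 + θ ^ 2) ^ β)
    (Eventually.of_forall hmeas)
    (eventually_mem_nhdsWithin.mono fun z hz =>
      ae_of_all _ (norm_cpow_mul_cpow_neg_le_of_mem_nonTangentialCone hβ.le hz))
    (integrable_const _) (ae_of_all _ hlim)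
  rwa [integral_indicator_const _ (measurableSet_singleton a), Complex.real_smul, mul_one] at hdom

theorem stmt7_general (β : ℝ) (hβ : 0 < β) (τ : Measure ℝ) [IsProbabilityMeasure τ]
    (a : ℝ) (θ : ℝ) :
    Tendsto
      (fun z : ℂ => (z - (a : ℂ)) ^ ((β : ℝ) : ℂ) * ∫ x, (z - (x : ℂ)) ^ ((-β : ℝ) : ℂ) ∂τ)
      (nhdsWithin (a : ℂ) {z : ℂ | 0 < z.im ∧ |z.re - a| < θ * z.im})
      (𝓝 (((τ {a}).toReal : ℂ))) :=
  (tendsto_integral_cpow_mul_cpow_neg_nonTangentialCone hβ τ a θ).congr fun _ =>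
    integral_const_mul _ _

theorem stmt7 (β : ℝ) (hβ : 0 < β) (τ : Measure ℝ) [IsProbabilityMeasure τ]
    (a : ℝ) (θ : ℝ) (hθ : 0 < θ) :
    Tendsto
      (fun z : ℂ => (z - (a : ℂ)) ^ ((β : ℝ) : ℂ) * ∫ x, (z - (x : ℂ)) ^ ((-β : ℝ) : ℂ) ∂τ)
      (nhdsWithin (a : ℂ) {z : ℂ | 0 < z.im ∧ |z.re - a| < θ * z.im})
      (𝓝 (((τ {a}).toReal : ℂ))) :=
  stmt7_general β hβ τ a θ
end

section
/- If ν(dy) = s y^{−s−1} 1_{y>1} dy is the Pareto(s) measure with s > β > −1 and x > 1, then ∫ (x − y)_−^β dν(y) = s x^{β − s} B(β + 1, s − β), where B is the Beta function. -/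
/-!
Substituting `y = x / u` maps `(0, 1)` onto `(x, ∞)` with Jacobian `x / u²`, and turns the
integrand into `s x^(β - s) u^(s - β - 1) (1 - u)^β`, so the integral is `s x^(β - s)` times the
Beta integral `B(s - β, β + 1) = Γ(β + 1) Γ(s - β) / Γ(s + 1)`.
-/

open Real MeasureTheory

theorem Real.integral_Ioo_rpow_mul_one_sub_rpow {a b : ℝ} (ha : 0 < a) (hb : 0 < b) :
    ∫ u in Set.Ioo (0 : ℝ) 1, u ^ (a - 1) * (1 - u) ^ (b - 1)
      = Gamma a * Gamma b / Gamma (a + b) := by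
  have hcomplex := Complex.betaIntegral_eq_Gamma_mul_div a b
    (by simpa using ha) (by simpa using hb)
  rw [Complex.betaIntegral, ← Complex.ofReal_add, Complex.Gamma_ofReal, Complex.Gamma_ofReal,
    Complex.Gamma_ofReal, ← Complex.ofReal_mul, ← Complex.ofReal_div] at hcomplex
  rw [← Complex.ofReal_inj, ← hcomplex, integral_Ioc_eq_integral_Ioo.symm,
    ← intervalIntegral.integral_of_le zero_le_one, ← intervalIntegral.integral_ofReal]
  refine intervalIntegral.integral_congr fun u hu => ?_
  rw [Set.uIcc_of_le zero_le_one] at hu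
  simp only [Complex.ofReal_mul]
  rw [Complex.ofReal_cpow hu.1, Complex.ofReal_cpow (sub_nonneg.2 hu.2)]
  push_cast
  rfl

theorem Real.image_div_Ioo_zero_one {x : ℝ} (hx : 0 < x) :
    (fun u : ℝ => x / u) '' Set.Ioo 0 1 = Set.Ioi x := by
  ext y
  constructor
  · rintro ⟨u, ⟨hu0, hu1⟩, rfl⟩
    exact (lt_div_iff₀ hu0).2 (by nlinarith)
  · intro (hy : x < y)
    have hy0 : 0 < y := hx.trans hy
    refine ⟨x / y, ⟨by positivity, (div_lt_one hy0).2 hy⟩, ?_⟩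
    field_simp

theorem integral_Ioi_eq_integral_Ioo_div {E : Type*} [NormedAddCommGroup E] [NormedSpace ℝ E]
    {x : ℝ} (hx : 0 < x) (f : ℝ → E) :
    ∫ y in Set.Ioi x, f y = ∫ u in Set.Ioo (0 : ℝ) 1, (x / u ^ 2) • f (x / u) := by
  have hderiv : ∀ u ∈ Set.Ioo (0 : ℝ) 1,
      HasDerivWithinAt (fun u => x / u) (-x / u ^ 2) (Set.Ioo 0 1) u := fun u hu => by
    simpa [div_eq_mul_inv, neg_div] using
      ((hasDerivAt_inv hu.1.ne').const_mul x).hasDerivWithinAt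
  have hinj : Set.InjOn (fun u : ℝ => x / u) (Set.Ioo 0 1) := fun u _ v _ huv => by
    simp only [div_eq_mul_inv] at huv
    exact inv_injective (mul_left_cancel₀ hx.ne' huv)
  rw [← Real.image_div_Ioo_zero_one hx,
    integral_image_eq_integral_abs_deriv_smul measurableSet_Ioo hderiv hinj]
  refine setIntegral_congr_fun measurableSet_Ioo fun u hu => ?_
  rw [abs_div, abs_neg, abs_of_pos hx, abs_of_pos (by have := hu.1; positivity)]

theorem pareto_integrand_comp_div {s β x u : ℝ} (hx : 0 < x) (hu : u ∈ Set.Ioo (0 : ℝ) 1) :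
    (x / u ^ 2) * ((x / u - x) ^ β * (s * (x / u) ^ (-s - 1)))
      = s * x ^ (β - s) * (u ^ (s - β - 1) * (1 - u) ^ β) := by
  obtain ⟨hu0, hu1⟩ := hu
  have hx_pow : x ^ (β - s) = x ^ (1 : ℝ) * x ^ β * x ^ (-s - 1) := by
    rw [← rpow_add hx, ← rpow_add hx]
    ring_nf
  have hu_pow : u ^ (s - β - 1) = (u ^ (2 : ℝ) * u ^ β * u ^ (-s - 1))⁻¹ := by
    rw [← rpow_add hu0, ← rpow_add hu0, ← rpow_neg hu0.le]
    ring_nf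
  rw [show x / u - x = x * (1 - u) * u⁻¹ by field_simp, mul_rpow (by positivity) (by positivity),
    mul_rpow hx.le (by linarith), inv_rpow hu0.le, div_rpow hx.le hu0.le, hx_pow, hu_pow,
    rpow_one, rpow_two]
  field_simp

theorem stmt15 (s β : ℝ) (hβ : -1 < β) (hs : β < s) (x : ℝ) (hx : 1 < x) :
    ∫ y in Set.Ioi x, (y - x) ^ β * (s * y ^ (-s - 1))
      = s * x ^ (β - s) * (Real.Gamma (β + 1) * Real.Gamma (s - β) / Real.Gamma (s + 1)) := by
  have hx0 : 0 < x := zero_lt_one.trans hx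
  have hbeta := Real.integral_Ioo_rpow_mul_one_sub_rpow (a := s - β) (b := β + 1)
    (by linarith) (by linarith)
  rw [add_sub_cancel_right, show s - β + (β + 1) = s + 1 by ring, mul_comm (Gamma (s - β))] at hbeta
  rw [integral_Ioi_eq_integral_Ioo_div hx0, ← hbeta, ← integral_const_mul]
  exact setIntegral_congr_fun measurableSet_Ioo fun u hu => pareto_integrand_comp_div hx0 hu
end

section
/- Let M be a real positive semidefinite n×n matrix, z = u + iv with v > 0 and u ≥ 0, e a unit vector, and B = (M − z I)^{−1}. Then |Im(1 + eᵀ B e)| ≥ v / (|z|² + eᵀ M² e), and hence |1 + eᵀ B e|^{α/2 − 1} ≤ v^{α/2 − 1} (|z|² + eᵀ M² e)^{1 − α/2} for α ∈ (0,2). -/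
/-!
Write `A = H - z • 1` with `H` Hermitian and `x = A⁻¹ e`. The imaginary part of `yᴴ A y` is
`-Im z ‖y‖²`; this makes `A` invertible and gives `Im (eᴴ A⁻¹ e) = Im z ‖x‖²`. Cauchy–Schwarz
applied to `‖e‖² = ⟪Aᴴ e, x⟫` gives `‖e‖⁴ ≤ ‖Aᴴ e‖² ‖x‖²`, and
`‖Aᴴ e‖² = eᴴ H² e - 2 Re z · eᴴ H e + |z|² ‖e‖² ≤ eᴴ H² e + |z|² ‖e‖²` once `Re z ≥ 0` and
`eᴴ H e ≥ 0`. The power bound follows because `t ↦ t ^ (α / 2 - 1)` is antitone.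
-/

open Matrix Complex ComplexOrder

namespace Matrix

variable {ι : Type*} [Fintype ι]

theorem norm_star_dotProduct_sq_le (a b : ι → ℂ) :
    ‖star a ⬝ᵥ b‖ ^ 2 ≤ (star a ⬝ᵥ a).re * (star b ⬝ᵥ b).re := by
  have h := inner_mul_inner_self_le (𝕜 := ℂ) (WithLp.toLp 2 a) (WithLp.toLp 2 b)
  simp only [EuclideanSpace.inner_toLp_toLp] at h
  rwa [dotProduct_comm b, dotProduct_comm a (star b), dotProduct_comm a, dotProduct_comm b,
    star_dotProduct b, norm_star, ← sq] at h

theorem ofReal_dotProduct (a b : ι → ℝ) :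
    ((a ⬝ᵥ b : ℝ) : ℂ) = (fun i => (a i : ℂ)) ⬝ᵥ fun i => (b i : ℂ) :=
  ofRealHom.map_dotProduct a b

theorem ofReal_mulVec (K : Matrix ι ι ℝ) (e : ι → ℝ) :
    (fun i => ((K *ᵥ e) i : ℂ)) = K.map ofReal *ᵥ fun i => (e i : ℂ) :=
  funext (ofRealHom.map_mulVec K e)

variable [DecidableEq ι] {H : Matrix ι ι ℂ}

theorem IsHermitian.im_star_dotProduct_sub_smul_one_mulVec (hH : H.IsHermitian) (z : ℂ)
    (y : ι → ℂ) : (star y ⬝ᵥ (H - z • 1) *ᵥ y).im = -z.im * (star y ⬝ᵥ y).re := by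
  have hHy : (star y ⬝ᵥ H *ᵥ y).im = 0 := hH.im_star_dotProduct_mulVec_self y
  have hy : (star y ⬝ᵥ y).im = 0 := (nonneg_iff.mp (dotProduct_star_self_nonneg y)).2.symm
  simp only [sub_mulVec, dotProduct_sub, smul_mulVec, one_mulVec, dotProduct_smul, smul_eq_mul,
    sub_im, mul_im, hHy, hy]
  ring

theorem IsHermitian.isUnit_det_sub_smul_one (hH : H.IsHermitian) {z : ℂ} (hz : z.im ≠ 0) :
    IsUnit (H - z • 1).det := by
  rw [isUnit_iff_ne_zero]
  intro hdet
  obtain ⟨y, hy0, hy⟩ := exists_mulVec_eq_zero_iff.mpr hdet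
  have hpos : 0 < (star y ⬝ᵥ y).re := (RCLike.pos_iff.mp (dotProduct_star_self_pos_iff.mpr hy0)).1
  have := hH.im_star_dotProduct_sub_smul_one_mulVec z y
  rw [hy, dotProduct_zero, zero_im, zero_eq_mul, neg_eq_zero] at this
  exact this.elim hz hpos.ne'

theorem IsHermitian.im_star_dotProduct_inv_sub_smul_one_mulVec (hH : H.IsHermitian) {z : ℂ}
    (hz : z.im ≠ 0) (e : ι → ℂ) :
    (star e ⬝ᵥ (H - z • 1)⁻¹ *ᵥ e).im
      = z.im * (star ((H - z • 1)⁻¹ *ᵥ e) ⬝ᵥ (H - z • 1)⁻¹ *ᵥ e).re := by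
  set x := (H - z • 1)⁻¹ *ᵥ e
  have hx : (H - z • 1) *ᵥ x = e := by
    rw [mulVec_mulVec, mul_nonsing_inv _ (hH.isUnit_det_sub_smul_one hz), one_mulVec]
  have := hH.im_star_dotProduct_sub_smul_one_mulVec z x
  rw [hx, star_dotProduct, star_def, conj_im] at this
  linarith

theorem re_star_dotProduct_self_sq_le_of_isUnit_det {A : Matrix ι ι ℂ} (hA : IsUnit A.det) (e : ι → ℂ) :
    (star e ⬝ᵥ e).re ^ 2
      ≤ (star (Aᴴ *ᵥ e) ⬝ᵥ Aᴴ *ᵥ e).re * (star (A⁻¹ *ᵥ e) ⬝ᵥ A⁻¹ *ᵥ e).re := by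
  have hself : star e ⬝ᵥ e = star (Aᴴ *ᵥ e) ⬝ᵥ A⁻¹ *ᵥ e := by
    rw [star_mulVec, conjTranspose_conjTranspose, ← dotProduct_mulVec, mulVec_mulVec,
      mul_nonsing_inv _ hA, one_mulVec]
  have hreal : star e ⬝ᵥ e = (star e ⬝ᵥ e).re :=
    eq_re_of_ofReal_le (r := 0) (by simp [dotProduct_star_self_nonneg e])
  calc (star e ⬝ᵥ e).re ^ 2 = ‖star e ⬝ᵥ e‖ ^ 2 := by
        rw [hreal, norm_real, Real.norm_eq_abs, sq_abs, ofReal_re]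
    _ ≤ _ := hself ▸ norm_star_dotProduct_sq_le _ _

theorem IsHermitian.re_star_dotProduct_conjTranspose_sub_smul_one_mulVec_le (hH : H.IsHermitian)
    {z : ℂ} (hz : 0 ≤ z.re) {e : ι → ℂ} (he : 0 ≤ (star e ⬝ᵥ H *ᵥ e).re) :
    (star ((H - z • 1)ᴴ *ᵥ e) ⬝ᵥ (H - z • 1)ᴴ *ᵥ e).re
      ≤ (star e ⬝ᵥ (H * H) *ᵥ e).re + ‖z‖ ^ 2 * (star e ⬝ᵥ e).re := by
  have hexpand : star ((H - z • 1)ᴴ *ᵥ e) ⬝ᵥ (H - z • 1)ᴴ *ᵥ e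
      = star e ⬝ᵥ (H * H) *ᵥ e - (2 * z.re : ℝ) * (star e ⬝ᵥ H *ᵥ e)
        + (‖z‖ ^ 2 : ℝ) * (star e ⬝ᵥ e) := by
    have htrace : ((2 * z.re : ℝ) : ℂ) = z + star z := by
      rw [star_def, add_conj]
    have hnorm : ((‖z‖ ^ 2 : ℝ) : ℂ) = z * star z := by
      rw [star_def, mul_conj, Complex.sq_norm]
    rw [htrace, hnorm, star_mulVec, conjTranspose_conjTranspose, ← dotProduct_mulVec,
      mulVec_mulVec, conjTranspose_sub, conjTranspose_smul, conjTranspose_one, hH.eq]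
    simp only [sub_mul, mul_sub, Matrix.mul_one, Matrix.one_mul, mul_smul_comm, smul_mul_assoc,
      sub_mulVec, smul_mulVec, one_mulVec, dotProduct_sub, dotProduct_smul, smul_eq_mul]
    ring
  rw [hexpand, add_re, sub_re, re_ofReal_mul, re_ofReal_mul]
  linarith [mul_nonneg hz he]

theorem IsHermitian.im_mul_re_star_dotProduct_self_sq_le (hH : H.IsHermitian) {z : ℂ}
    (hv : 0 < z.im) (hu : 0 ≤ z.re) {e : ι → ℂ} (he : 0 ≤ (star e ⬝ᵥ H *ᵥ e).re) :
    z.im * (star e ⬝ᵥ e).re ^ 2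
      ≤ ((star e ⬝ᵥ (H * H) *ᵥ e).re + ‖z‖ ^ 2 * (star e ⬝ᵥ e).re)
        * (star e ⬝ᵥ (H - z • 1)⁻¹ *ᵥ e).im := by
  rw [hH.im_star_dotProduct_inv_sub_smul_one_mulVec hv.ne']
  have hN : 0 ≤ (star ((H - z • 1)⁻¹ *ᵥ e) ⬝ᵥ (H - z • 1)⁻¹ *ᵥ e).re :=
    (nonneg_iff.mp (dotProduct_star_self_nonneg _)).1
  have hCS := re_star_dotProduct_self_sq_le_of_isUnit_det (hH.isUnit_det_sub_smul_one hv.ne') e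
  have hW := hH.re_star_dotProduct_conjTranspose_sub_smul_one_mulVec_le hu he
  calc z.im * (star e ⬝ᵥ e).re ^ 2
      ≤ z.im * ((star ((H - z • 1)ᴴ *ᵥ e) ⬝ᵥ (H - z • 1)ᴴ *ᵥ e).re
          * (star ((H - z • 1)⁻¹ *ᵥ e) ⬝ᵥ (H - z • 1)⁻¹ *ᵥ e).re) := by gcongr
    _ ≤ _ := by rw [mul_left_comm]; gcongr

end Matrix

theorem Real.rpow_le_rpow_mul_rpow_neg_of_div_le {v D t p : ℝ} (hv : 0 < v) (hD : 0 < D)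
    (h : v / D ≤ t) (hp : p ≤ 0) : t ^ p ≤ v ^ p * D ^ (-p) := by
  calc t ^ p ≤ (v / D) ^ p := Real.rpow_le_rpow_of_nonpos (div_pos hv hD) h hp
    _ = v ^ p * D ^ (-p) := by
      rw [Real.div_rpow hv.le hD.le, div_eq_mul_inv, Real.rpow_neg hD.le]

theorem stmt17 (n : ℕ) (M : Matrix (Fin n) (Fin n) ℝ) (hM : M.PosSemidef)
    (z : ℂ) (hv : 0 < z.im) (hu : 0 ≤ z.re)
    (e : Fin n → ℝ) (he : ∑ i, e i ^ 2 = 1) (α : ℝ) (hα : α ∈ Set.Ioo (0:ℝ) 2) :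
    let B : Matrix (Fin n) (Fin n) ℂ := (M.map Complex.ofReal - z • 1)⁻¹
    let q : ℂ := (fun i => (e i : ℂ)) ⬝ᵥ B.mulVec (fun i => (e i : ℂ))
    z.im / (‖z‖ ^ 2 + e ⬝ᵥ (M * M).mulVec e) ≤ |(1 + q).im| ∧
    ‖1 + q‖ ^ (α / 2 - 1)
      ≤ z.im ^ (α / 2 - 1) * (‖z‖ ^ 2 + e ⬝ᵥ (M * M).mulVec e) ^ (1 - α / 2) := by
  intro B q
  set e' : Fin n → ℂ := fun i => (e i : ℂ)
  have hstar : star e' = e' := funext fun i => conj_ofReal (e i)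
  have hH : (M.map ofReal).IsHermitian := hM.1.map _ fun x => (conj_ofReal x).symm
  have hquad : ∀ K : Matrix (Fin n) (Fin n) ℝ,
      (star e' ⬝ᵥ K.map ofReal *ᵥ e').re = e ⬝ᵥ K *ᵥ e := fun K => by
    rw [hstar, ← ofReal_mulVec, ← ofReal_dotProduct, ofReal_re]
  have hunit : (star e' ⬝ᵥ e').re = 1 := by
    rw [hstar, ← ofReal_dotProduct, ofReal_re, ← he]
    exact Finset.sum_congr rfl fun i _ => (sq (e i)).symm
  have hkey := hH.im_mul_re_star_dotProduct_self_sq_le hv hu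
    (e := e') (by rw [hquad]; simpa using hM.dotProduct_mulVec_nonneg e)
  have hMM : M.map ofReal * M.map ofReal = (M * M).map ofReal :=
    (Matrix.map_mul (f := ofRealHom)).symm
  have hD : 0 < ‖z‖ ^ 2 + e ⬝ᵥ (M * M) *ᵥ e := by
    have hz : 0 < ‖z‖ := norm_pos_iff.mpr fun h => by simp [h] at hv
    have := (posSemidef_conjTranspose_mul_self M).dotProduct_mulVec_nonneg e
    rw [hM.1.eq, star_trivial] at this
    exact add_pos_of_pos_of_nonneg (by positivity) this
  have hq : q = star e' ⬝ᵥ (M.map ofReal - z • 1)⁻¹ *ᵥ e' := by rw [hstar]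
  rw [hunit, hMM, hquad, ← hq, one_pow, mul_one, mul_one, add_comm] at hkey
  have him : z.im / (‖z‖ ^ 2 + e ⬝ᵥ (M * M) *ᵥ e) ≤ |(1 + q).im| := by
    rw [div_le_iff₀ hD, add_im, one_im, zero_add, mul_comm]
    exact hkey.trans (by gcongr; exact le_abs_self q.im)
  refine ⟨him, ?_⟩
  rw [show 1 - α / 2 = -(α / 2 - 1) by ring]
  exact Real.rpow_le_rpow_mul_rpow_neg_of_div_le hv hD (him.trans (abs_im_le_norm _))
    (by linarith [hα.2])
end

section
/- Let (Y₁,…,Yₙ) be a random vector with ΣᵢYᵢ² = 1 a.s. and exchangeable components, and suppose n·E[Y₁⁴] → 1 as n → ∞. Let k* = argmax_k |Y_k|. Then ‖(Y₁,…,Yₙ) − sign(Y_{k*}) e_{k*}‖₂ → 0 in probability; equivalently |Y_{k*}| → 1 in probability. -/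
open MeasureTheory ProbabilityTheory Filter Topology

/-!
If `∑ yᵢ² = 1` and `m = maxᵢ |yᵢ|`, then `∑ yᵢ⁴ ≤ m² ∑ yᵢ² = m² ≤ m ≤ 1`, so the deficit `1 - m`
is dominated by `1 - ∑ yᵢ⁴`. By exchangeability `E[∑ Yᵢ⁴] = n E[Y₁⁴] → 1`, so the nonnegative
variable `1 - ∑ Yᵢ⁴` tends to `0` in mean, and Markov's inequality gives `m → 1` in probability.
-/

lemma sq_le_one_of_sum_sq_eq_one {ι : Type*} [Fintype ι] {y : ι → ℝ}
    (hy : ∑ i, y i ^ 2 = 1) (i : ι) : y i ^ 2 ≤ 1 :=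
  hy ▸ Finset.single_le_sum (fun j _ => sq_nonneg (y j)) (Finset.mem_univ i)

lemma abs_iSup_abs_sub_one_le_one_sub_sum_pow_four {ι : Type*} [Fintype ι] {y : ι → ℝ}
    (hy : ∑ i, y i ^ 2 = 1) : |(⨆ i, |y i|) - 1| ≤ 1 - ∑ i, y i ^ 4 := by
  obtain ⟨i₀, -, -⟩ := Finset.exists_ne_zero_of_sum_ne_zero (hy ▸ one_ne_zero)
  set m := ⨆ i, |y i|
  have hle_m : ∀ i, |y i| ≤ m := le_ciSup (Set.finite_range _).bddAbove
  have hm_nonneg : 0 ≤ m := (abs_nonneg _).trans (hle_m i₀)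
  have : Nonempty ι := ⟨i₀⟩
  have hm_le_one : m ≤ 1 :=
    ciSup_le fun i => sq_le_one_iff_abs_le_one _ |>.mp (sq_le_one_of_sum_sq_eq_one hy i)
  have hsum_le : ∑ i, y i ^ 4 ≤ m ^ 2 :=
    calc ∑ i, y i ^ 4 = ∑ i, y i ^ 2 * y i ^ 2 := by simp only [← pow_add]
      _ ≤ ∑ i, m ^ 2 * y i ^ 2 := Finset.sum_le_sum fun i _ =>
          mul_le_mul_of_nonneg_right (sq_abs (y i) ▸ pow_le_pow_left₀ (abs_nonneg _) (hle_m i) 2)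
            (sq_nonneg _)
      _ = m ^ 2 := by rw [← Finset.mul_sum, hy, mul_one]
  rw [abs_of_nonpos (by linarith)]
  nlinarith

def Exchangeable {Ω ι E : Type*} [MeasurableSpace Ω] [MeasurableSpace E] (μ : Measure Ω)
    (X : ι → Ω → E) : Prop :=
  ∀ σ : Equiv.Perm ι, μ.map (fun ω i => X (σ i) ω) = μ.map (fun ω i => X i ω)

lemma Exchangeable.identDistrib {Ω ι E : Type*} [MeasurableSpace Ω] [MeasurableSpace E]
    {μ : Measure Ω} {X : ι → Ω → E} (hX : Exchangeable μ X)
    (hmeas : ∀ i, Measurable (X i)) (i j : ι) : IdentDistrib (X i) (X j) μ μ := by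
  classical
  have hvec : IdentDistrib (fun ω k => X (Equiv.swap i j k) ω) (fun ω k => X k ω) μ μ :=
    ⟨(measurable_pi_lambda _ fun k => hmeas _).aemeasurable,
      (measurable_pi_lambda _ hmeas).aemeasurable, hX _⟩
  simpa [Function.comp_def] using hvec.comp (measurable_pi_apply j)

section SumOfSquaresOne

variable {Ω ι : Type*} [MeasurableSpace Ω] {μ : Measure Ω} [Fintype ι] {Y : ι → Ω → ℝ}

lemma integrable_pow_four_of_sum_sq_eq_one [IsFiniteMeasure μ] (hmeas : ∀ i, Measurable (Y i))
    (hnorm : ∀ᵐ ω ∂μ, ∑ i, Y i ω ^ 2 = 1) (i : ι) : Integrable (fun ω => Y i ω ^ 4) μ := by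
  refine Integrable.of_bound ((hmeas i).pow_const 4).aestronglyMeasurable 1 ?_
  filter_upwards [hnorm] with ω hω
  rw [Real.norm_eq_abs, abs_of_nonneg (by positivity), show 4 = 2 * 2 from rfl, pow_mul]
  exact pow_le_one₀ (sq_nonneg _) (sq_le_one_of_sum_sq_eq_one hω i)

lemma integral_sum_pow_four_of_exchangeable [IsFiniteMeasure μ] (hmeas : ∀ i, Measurable (Y i))
    (hnorm : ∀ᵐ ω ∂μ, ∑ i, Y i ω ^ 2 = 1) (hexch : Exchangeable μ Y) (i₀ : ι) :
    ∫ ω, ∑ i, Y i ω ^ 4 ∂μ = Fintype.card ι * ∫ ω, Y i₀ ω ^ 4 ∂μ := by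
  rw [integral_finsetSum _ fun i _ => integrable_pow_four_of_sum_sq_eq_one hmeas hnorm i]
  have hmoment (i : ι) : ∫ ω, Y i ω ^ 4 ∂μ = ∫ ω, Y i₀ ω ^ 4 ∂μ :=
    ((hexch.identDistrib hmeas i i₀).comp (measurable_id.pow_const 4)).integral_eq
  simp [hmoment]

lemma measure_le_abs_iSup_abs_sub_one_le [IsProbabilityMeasure μ] (hmeas : ∀ i, Measurable (Y i))
    (hnorm : ∀ᵐ ω ∂μ, ∑ i, Y i ω ^ 2 = 1) (hexch : Exchangeable μ Y) (i₀ : ι)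
    {ε : ℝ} (hε : 0 < ε) :
    μ {ω | ε ≤ |(⨆ k, |Y k ω|) - 1|}
      ≤ ENNReal.ofReal ((1 - Fintype.card ι * ∫ ω, Y i₀ ω ^ 4 ∂μ) / ε) := by
  set S := fun ω => ∑ i, Y i ω ^ 4
  have hS_int : Integrable S μ :=
    integrable_finsetSum _ fun i _ => integrable_pow_four_of_sum_sq_eq_one hmeas hnorm i
  have hgap : ∀ᵐ ω ∂μ, |(⨆ k, |Y k ω|) - 1| ≤ 1 - S ω :=
    hnorm.mono fun ω hω => abs_iSup_abs_sub_one_le_one_sub_sum_pow_four hω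
  have hmarkov := mul_meas_ge_le_integral_of_nonneg
    (hgap.mono fun ω h => (abs_nonneg _).trans h) ((integrable_const 1).sub hS_int) ε
  rw [integral_sub (integrable_const 1) hS_int,
    integral_sum_pow_four_of_exchangeable hmeas hnorm hexch i₀] at hmarkov
  calc μ {ω | ε ≤ |(⨆ k, |Y k ω|) - 1|} ≤ μ {ω | ε ≤ 1 - S ω} :=
        measure_mono_ae (hgap.mono fun ω h hmem => le_trans hmem h)
    _ ≤ _ := by
        rw [← ofReal_measureReal]
        exact ENNReal.ofReal_le_ofReal ((le_div_iff₀' hε).mpr (by simpa using hmarkov))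

end SumOfSquaresOne

theorem stmt19 (Ω : ℕ → Type*) (mΩ : ∀ n, MeasureSpace (Ω n))
    (hprob : ∀ n, IsProbabilityMeasure (ℙ : Measure (Ω n)))
    (Y : (n : ℕ) → Fin n → Ω n → ℝ)
    (hmeas : ∀ n (i : Fin n), Measurable (Y n i))
    (hnorm : ∀ n, ∀ᵐ ω ∂(ℙ : Measure (Ω n)), ∑ i : Fin n, (Y n i ω) ^ 2 = 1)
    (hexch : ∀ n (σ : Equiv.Perm (Fin n)),
      Measure.map (fun ω (i : Fin n) => Y n (σ i) ω) (ℙ : Measure (Ω n))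
        = Measure.map (fun ω (i : Fin n) => Y n i ω) (ℙ : Measure (Ω n)))
    (h4 : Tendsto
      (fun n : ℕ => if h : 0 < n then
          (n : ℝ) * ∫ ω, (Y n ⟨0, h⟩ ω) ^ 4 ∂(ℙ : Measure (Ω n))
        else 0)
      atTop (𝓝 1)) :
    ∀ ε > (0:ℝ),
      Tendsto
        (fun n : ℕ => (ℙ : Measure (Ω n))
          {ω : Ω n | ε ≤ |(⨆ k : Fin n, |Y n k ω|) - 1|})
        atTop (𝓝 0) := by
  intro ε hε
  have hbound_lim :=
    ENNReal.tendsto_ofReal ((tendsto_const_nhds (x := (1 : ℝ))).sub h4 |>.div_const ε)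
  rw [sub_self, zero_div, ENNReal.ofReal_zero] at hbound_lim
  refine tendsto_of_tendsto_of_tendsto_of_le_of_le' tendsto_const_nhds hbound_lim
    (Eventually.of_forall fun _ => zero_le) ?_
  filter_upwards [eventually_gt_atTop 0] with n hn
  have := hprob n
  simpa [hn] using measure_le_abs_iSup_abs_sub_one_le (hmeas n) (hnorm n) (hexch n) ⟨0, hn⟩ hε
end
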